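/- arXiv:2604.02312 — 3 statements merged into one kernel-verified Lean document; each statement's English description precedes it below -/
import Mathlib

section
/- For every real number $\beta > 0$ and every $\beta$-semiconcave function $f : \mathbb{R}^d \to \mathbb{R}$ (i.e. $x \mapsto \tfrac{\beta}{2}|x|^2 - f(x)$ is convex), the function $x \mapsto -\log\big((e^{-f} * \gamma)(x)\big)$ is $\tfrac{\beta}{1+\beta}$-semiconcave, i.e. $x \mapsto \tfrac{\beta}{2(1+\beta)}|x|^2 + \log\big((e^{-f} * \gamma)(x)\big)$ is convex, where $\gamma$ is the standard Gaussian density on $\mathbb{R}^d$ and $*$ denotes convolution. -/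
open MeasureTheory ProbabilityTheory Filter Topology Set
open scoped ENNReal RealInnerProductSpace

noncomputable section

abbrev Euc (d : ℕ) := EuclideanSpace ℝ (Fin d)

/-- Density of the Gaussian with mean `x` and identity covariance. -/
def gaussDensity {d : ℕ} (x y : Euc d) : ℝ :=
  (2 * Real.pi) ^ (-(d : ℝ) / 2) * Real.exp (-‖y - x‖ ^ 2 / 2)

/-- Gaussian measure with mean `x` and identity covariance. -/
def gaussian {d : ℕ} (x : Euc d) : Measure (Euc d) :=
  volume.withDensity fun y => ENNReal.ofReal (gaussDensity x y)

/-- Finite second moment. -/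
def FiniteSecondMoment {d : ℕ} (μ : Measure (Euc d)) : Prop :=
  ∫⁻ x, ENNReal.ofReal (‖x‖ ^ 2) ∂μ < ⊤

/-- Barycenter of a measure. -/
def bary {d : ℕ} (μ : Measure (Euc d)) : Euc d := ∫ x, x ∂μ

open Classical in
/-- Relative entropy `H(ρ | η)`, valued in `ℝ≥0∞`. -/
def relEnt {d : ℕ} (ρ η : Measure (Euc d)) : ℝ≥0∞ :=
  if ρ ≪ η ∧ Integrable (fun x => Real.log (ρ.rnDeriv η x).toReal) ρ then
    ENNReal.ofReal (∫ x, Real.log (ρ.rnDeriv η x).toReal ∂ρ)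
  else ⊤

/-- Squared 2-Wasserstein distance. -/
def W2sq {d : ℕ} (μ ν : Measure (Euc d)) : ℝ≥0∞ :=
  ⨅ (π : Measure (Euc d × Euc d)) (_ : π.fst = μ ∧ π.snd = ν),
    ∫⁻ p, ENNReal.ofReal (‖p.1 - p.2‖ ^ 2) ∂π


/-!
With `g = β/2 ‖·‖² - f` convex, completing the square in `y` gives
`e^{-f(x-y)} γ(y) = (2π)^{-d/2} e^{-β‖x‖²/(2(1+β))} e^{g(z - y') - (1+β)‖y'‖²/2}`
with `z = x/(1+β)` and `y' = y - βx/(1+β)`. After translating `y'` away, it remains to see that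
`z ↦ log ∫ e^{G(z,y)} dy` is convex whenever every `G(·,y)` is, which is Hölder's inequality
with exponents `1/t` and `1/(1-t)`.
-/

open Real

section LogConvexity

variable {α : Type*} [MeasurableSpace α] {μ : Measure α}

theorem integral_exp_le_rpow_mul_rpow {G G₀ G₁ : α → ℝ} {t s : ℝ}
    (hG : Integrable (fun y => exp (G y)) μ) (hG₀ : Integrable (fun y => exp (G₀ y)) μ)
    (hG₁ : Integrable (fun y => exp (G₁ y)) μ) (ht : 0 ≤ t) (hs : 0 ≤ s) (hts : t + s = 1)
    (hle : ∀ y, G y ≤ t * G₀ y + s * G₁ y) :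
    ∫ y, exp (G y) ∂μ ≤ (∫ y, exp (G₀ y) ∂μ) ^ t * (∫ y, exp (G₁ y) ∂μ) ^ s := by
  have hexp_nonneg : ∀ H : α → ℝ, 0 ≤ᵐ[μ] fun y => exp (H y) :=
    fun H => ae_of_all _ fun y => (exp_pos (H y)).le
  have hlint : ENNReal.ofReal (∫ y, exp (G y) ∂μ)
      ≤ ENNReal.ofReal ((∫ y, exp (G₀ y) ∂μ) ^ t * (∫ y, exp (G₁ y) ∂μ) ^ s) := by
    rw [ENNReal.ofReal_mul (by positivity),
      ← ENNReal.ofReal_rpow_of_nonneg (integral_nonneg fun y => (exp_pos _).le) ht,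
      ← ENNReal.ofReal_rpow_of_nonneg (integral_nonneg fun y => (exp_pos _).le) hs,
      ofReal_integral_eq_lintegral_ofReal hG (hexp_nonneg G),
      ofReal_integral_eq_lintegral_ofReal hG₀ (hexp_nonneg G₀),
      ofReal_integral_eq_lintegral_ofReal hG₁ (hexp_nonneg G₁)]
    calc ∫⁻ y, ENNReal.ofReal (exp (G y)) ∂μ
        ≤ ∫⁻ y, ENNReal.ofReal (exp (G₀ y)) ^ t * ENNReal.ofReal (exp (G₁ y)) ^ s ∂μ := by
          refine lintegral_mono fun y => ?_
          rw [ENNReal.ofReal_rpow_of_pos (exp_pos _), ENNReal.ofReal_rpow_of_pos (exp_pos _),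
            ← ENNReal.ofReal_mul (by positivity), ← exp_mul, ← exp_mul, ← exp_add]
          exact ENNReal.ofReal_le_ofReal (exp_le_exp.2 (by linarith [hle y]))
      _ ≤ _ := ENNReal.lintegral_mul_norm_pow_le hG₀.aemeasurable.ennreal_ofReal
          hG₁.aemeasurable.ennreal_ofReal ht hs hts
  exact (ENNReal.ofReal_le_ofReal_iff (by positivity)).1 hlint

theorem convexOn_log_integral_exp {E : Type*} [AddCommGroup E] [Module ℝ E] {S : Set E}
    {G : E → α → ℝ} (hS : Convex ℝ S) (hG : ∀ y, ConvexOn ℝ S fun z => G z y)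
    (hint : ∀ z ∈ S, Integrable (fun y => exp (G z y)) μ) :
    ConvexOn ℝ S fun z => log (∫ y, exp (G z y) ∂μ) := by
  rcases eq_zero_or_neZero μ with rfl | hμ
  · simpa using convexOn_const 0 hS
  refine ⟨hS, fun z₀ hz₀ z₁ hz₁ t s ht hs hts => ?_⟩
  have hpos : ∀ z ∈ S, 0 < ∫ y, exp (G z y) ∂μ := fun z hz => integral_exp_pos (hint z hz)
  have hmem : t • z₀ + s • z₁ ∈ S := hS hz₀ hz₁ ht hs hts
  calc log (∫ y, exp (G (t • z₀ + s • z₁) y) ∂μ)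
      ≤ log ((∫ y, exp (G z₀ y) ∂μ) ^ t * (∫ y, exp (G z₁ y) ∂μ) ^ s) :=
        log_le_log (hpos _ hmem) <| integral_exp_le_rpow_mul_rpow (hint _ hmem) (hint z₀ hz₀)
          (hint z₁ hz₁) ht hs hts fun y => (hG y).2 hz₀ hz₁ ht hs hts
    _ = t • log (∫ y, exp (G z₀ y) ∂μ) + s • log (∫ y, exp (G z₁ y) ∂μ) := by
        rw [log_mul (rpow_pos_of_pos (hpos z₀ hz₀) t).ne' (rpow_pos_of_pos (hpos z₁ hz₁) s).ne',
          log_rpow (hpos z₀ hz₀), log_rpow (hpos z₁ hz₁), smul_eq_mul, smul_eq_mul]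

end LogConvexity

theorem sq_norm_completing_square {E : Type*} [NormedAddCommGroup E] [InnerProductSpace ℝ E]
    {β : ℝ} (hβ : 1 + β ≠ 0) (x y : E) :
    β / 2 * ‖x - y‖ ^ 2 + ‖y‖ ^ 2 / 2
      = β / (2 * (1 + β)) * ‖x‖ ^ 2 + (1 + β) / 2 * ‖y - (β / (1 + β)) • x‖ ^ 2 := by
  rw [norm_sub_sq_real, norm_sub_sq_real, real_inner_smul_right, norm_smul, mul_pow,
    Real.norm_eq_abs, sq_abs, real_inner_comm]
  field_simp
  ring

section GaussianSmoothing

variable {d : ℕ}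

def smoothingExponent (β : ℝ) (f : Euc d → ℝ) (z y : Euc d) : ℝ :=
  β / 2 * ‖z - y‖ ^ 2 - f (z - y) - (1 + β) / 2 * ‖y‖ ^ 2

theorem convexOn_smoothingExponent {β : ℝ} {f : Euc d → ℝ}
    (hf : ConvexOn ℝ univ fun x => β / 2 * ‖x‖ ^ 2 - f x) (y : Euc d) :
    ConvexOn ℝ univ fun z => smoothingExponent β f z y := by
  refine ⟨convex_univ, fun z₀ _ z₁ _ a b ha hb hab => ?_⟩
  have hcomb : a • z₀ + b • z₁ - y = a • (z₀ - y) + b • (z₁ - y) := by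
    rw [smul_sub, smul_sub, sub_add_sub_comm, ← add_smul, hab, one_smul]
  have hconst : a * ((1 + β) / 2 * ‖y‖ ^ 2) + b * ((1 + β) / 2 * ‖y‖ ^ 2)
      = (1 + β) / 2 * ‖y‖ ^ 2 := by
    rw [← add_mul, hab, one_mul]
  have := hf.2 (mem_univ (z₀ - y)) (mem_univ (z₁ - y)) ha hb hab
  simp only [smoothingExponent, smul_eq_mul, hcomb] at this ⊢
  linarith

theorem exp_neg_mul_gaussDensity_eq {β : ℝ} (hβ : 1 + β ≠ 0) (f : Euc d → ℝ) (x y : Euc d) :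
    exp (-f (x - y)) * gaussDensity 0 y
      = (2 * π) ^ (-(d : ℝ) / 2) * exp (-(β / (2 * (1 + β)) * ‖x‖ ^ 2))
        * exp (smoothingExponent β f ((1 + β)⁻¹ • x) (y - (β / (1 + β)) • x)) := by
  have hx : (1 + β)⁻¹ • x - (y - (β / (1 + β)) • x) = x - y := by
    have hsum : (1 + β)⁻¹ + β / (1 + β) = 1 := by field_simp
    rw [sub_sub_eq_add_sub, ← add_smul, hsum, one_smul]
  rw [smoothingExponent, hx, gaussDensity, sub_zero, mul_left_comm, mul_assoc, ← exp_add,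
    ← exp_add]
  congr 2
  linarith [sq_norm_completing_square hβ x y]

theorem integrable_exp_smoothingExponent {β : ℝ} (hβ : 1 + β ≠ 0) {f : Euc d → ℝ} {x : Euc d}
    (hint : Integrable fun y => exp (-f (x - y)) * gaussDensity 0 y) :
    Integrable fun y => exp (smoothingExponent β f ((1 + β)⁻¹ • x) y) := by
  simp_rw [exp_neg_mul_gaussDensity_eq hβ] at hint
  have := ((integrable_const_mul_iff (IsUnit.mk0 _ (by positivity)) _).1 hint).comp_add_right
    ((β / (1 + β)) • x)
  simpa using this

theorem integral_exp_neg_mul_gaussDensity_eq {β : ℝ} (hβ : 1 + β ≠ 0) (f : Euc d → ℝ)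
    (x : Euc d) :
    ∫ y, exp (-f (x - y)) * gaussDensity 0 y
      = (2 * π) ^ (-(d : ℝ) / 2) * exp (-(β / (2 * (1 + β)) * ‖x‖ ^ 2))
        * ∫ y, exp (smoothingExponent β f ((1 + β)⁻¹ • x) y) := by
  simp_rw [exp_neg_mul_gaussDensity_eq hβ, integral_const_mul]
  rw [integral_sub_right_eq_self (fun y => exp (smoothingExponent β f ((1 + β)⁻¹ • x) y))]

end GaussianSmoothing

theorem semiconcavity_of_gaussian_smoothing_general {d : ℕ} (β : ℝ) (hβ : 0 < β)
    (f : Euc d → ℝ)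
    (hf : ConvexOn ℝ Set.univ fun x => β / 2 * ‖x‖ ^ 2 - f x)
    (hint : ∀ x : Euc d, Integrable fun y => Real.exp (-f (x - y)) * gaussDensity 0 y) :
    ConvexOn ℝ Set.univ fun x : Euc d =>
      β / (2 * (1 + β)) * ‖x‖ ^ 2
        + Real.log (∫ y, Real.exp (-f (x - y)) * gaussDensity 0 y) := by
  have hβ' : 1 + β ≠ 0 := by positivity
  have hint' : ∀ z, Integrable fun y => exp (smoothingExponent β f z y) := fun z => by
    simpa [smul_smul, inv_mul_cancel₀ hβ'] using
      integrable_exp_smoothingExponent hβ' (hint ((1 + β) • z))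
  have hconv : ConvexOn ℝ univ fun z => log (∫ y, exp (smoothingExponent β f z y)) :=
    convexOn_log_integral_exp convex_univ (convexOn_smoothingExponent hf) fun z _ => hint' z
  have hrepr : ∀ x : Euc d, β / (2 * (1 + β)) * ‖x‖ ^ 2
      + log (∫ y, exp (-f (x - y)) * gaussDensity 0 y)
      = log (∫ y, exp (smoothingExponent β f ((1 + β)⁻¹ • x) y))
        + log ((2 * π) ^ (-(d : ℝ) / 2)) := fun x => by
    rw [integral_exp_neg_mul_gaussDensity_eq hβ', log_mul (by positivity)
      (integral_exp_pos (hint' _)).ne', log_mul (by positivity) (exp_pos _).ne', log_exp]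
    ring
  refine ((hconv.comp_linearMap ((1 + β)⁻¹ • LinearMap.id)).add_const
    (log ((2 * π) ^ (-(d : ℝ) / 2)))).congr fun x _ => ?_
  simp only [Pi.add_apply, Function.comp_apply, LinearMap.smul_apply, LinearMap.id_apply, hrepr]

/-- If `f` is `β`-semiconcave, then `-log(e^{-f} * γ)` is `β/(1+β)`-semiconcave. -/
theorem semiconcavity_of_gaussian_smoothing {d : ℕ} (β : ℝ) (hβ : 0 < β)
    (f : Euc d → ℝ)
    (hf : ConvexOn ℝ Set.univ fun x => β / 2 * ‖x‖ ^ 2 - f x)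
    (hint : ∀ x : Euc d, Integrable fun y => Real.exp (-f (x - y)) * gaussDensity 0 y)
    (hpos : ∀ x : Euc d, 0 < ∫ y, Real.exp (-f (x - y)) * gaussDensity 0 y) :
    ConvexOn ℝ Set.univ fun x : Euc d =>
      β / (2 * (1 + β)) * ‖x‖ ^ 2
        + Real.log (∫ y, Real.exp (-f (x - y)) * gaussDensity 0 y) :=
  semiconcavity_of_gaussian_smoothing_general β hβ f hf hint
end
end

section
/- Let $\beta > 0$ and let $g : \mathbb{R}^d \to \mathbb{R}$ be such that $h := q_{\beta/(1+\beta)} - g$ is convex, where $q_c(x) := \tfrac{c}{2}|x|^2$. Then the function $u(x) := \tfrac12|x|^2 - \tfrac{1}{\beta}\, (q_\beta \Box (-g))(x)$, where $(q_\beta \Box (-g))(x) := \inf_{y} \{\tfrac{\beta}{2}|x-y|^2 - g(y)\}$, is convex and $\tfrac{1+\beta}{\beta}$-smooth; in particular, $u$ is differentiable and $\nabla u$ is $\tfrac{1+\beta}{\beta}$-Lipschitz. -/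
open MeasureTheory ProbabilityTheory Filter Topology Set
open scoped ENNReal RealInnerProductSpace

noncomputable section

/-! With `ψ y = ‖y‖² / 2 - g y / β`, expanding the square shows that the function in question is
the convex conjugate `ψ*(x) = sup_y ⟪x, y⟫ - ψ y`. Semiconcavity of `g` makes `ψ` strongly convex
with modulus `m = β / (1 + β)`, so for every `x` the supremum is attained at some `Y x`, and `ψ*` is
convex as a supremum of affine functions. Adding the strong-minimality inequalities at `Y a` and
`Y b` gives `m ‖Y a - Y b‖² ≤ ⟪a - b, Y a - Y b⟫`, so `Y` is `1/m = (1 + β)/β`-Lipschitz, and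
squeezing `ψ* x' - ψ* x - ⟪Y x, x' - x⟫` between `0` and `⟪x' - x, Y x' - Y x⟫` shows `∇ψ* = Y`. -/

section StrongConvexity

variable {E : Type*} [NormedAddCommGroup E] [InnerProductSpace ℝ E] {m : ℝ} {f ψ : E → ℝ}
  {Y : E → E}

lemma StrongConvexOn.sub_inner (hf : StrongConvexOn univ m f) (x : E) :
    StrongConvexOn univ m fun y => f y - ⟪x, y⟫ := by
  rw [strongConvexOn_iff_convex] at hf ⊢
  refine (hf.sub ((innerₛₗ ℝ x).concaveOn convex_univ)).congr fun y _ => ?_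
  simp only [Pi.sub_apply, innerₛₗ_apply_apply]
  ring

lemma StrongConvexOn.add_sq_le_of_isMinOn (hf : StrongConvexOn univ m f) {x : E}
    (hx : IsMinOn f univ x) (y : E) : f x + m / 2 * ‖y - x‖ ^ 2 ≤ f y := by
  have hclose : ∀ t ∈ Ioo (0 : ℝ) 1, f x + (1 - t) * (m / 2 * ‖y - x‖ ^ 2) ≤ f y := by
    rintro t ⟨ht0, ht1⟩
    have hconv := hf.2 (mem_univ y) (mem_univ x) ht0.le (sub_nonneg.2 ht1.le) (by ring)
    have hmin : f x ≤ f (t • y + (1 - t) • x) := hx (mem_univ _)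
    simp only [smul_eq_mul] at hconv
    nlinarith
  have hlim : Tendsto (fun t : ℝ => f x + (1 - t) * (m / 2 * ‖y - x‖ ^ 2)) (𝓝[>] 0)
      (𝓝 (f x + (1 - 0) * (m / 2 * ‖y - x‖ ^ 2))) :=
    (Continuous.tendsto (by fun_prop) 0).mono_left nhdsWithin_le_nhds
  simpa using le_of_tendsto hlim (mem_of_superset (Ioo_mem_nhdsGT one_pos) hclose)

lemma StrongConvexOn.quadratic_lower_bound (hf : StrongConvexOn univ m f) {b : ℝ}
    (hb : ∀ y, b ≤ f y) (y : E) : 2 * b - f 0 + m / 4 * ‖y‖ ^ 2 ≤ f y := by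
  have hmid := hf.2 (mem_univ y) (mem_univ 0) (by norm_num : (0 : ℝ) ≤ 1 / 2)
    (by norm_num : (0 : ℝ) ≤ 1 / 2) (by norm_num)
  simp only [smul_eq_mul, smul_zero, add_zero, sub_zero] at hmid
  linarith [hb ((1 / 2 : ℝ) • y)]

lemma StrongConvexOn.exists_isMinOn [FiniteDimensional ℝ E] (hf : StrongConvexOn univ m f)
    (hm : 0 < m) (hb : BddBelow (range f)) : ∃ x, IsMinOn f univ x := by
  obtain ⟨b, hb⟩ := hb
  have hcont : Continuous f := by
    have hconv := strongConvexOn_iff_convex.1 hf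
    have hq : Continuous fun y : E => m / 2 * ‖y‖ ^ 2 := by fun_prop
    exact ((continuousOn_univ.1 (hconv.continuousOn isOpen_univ)).add hq).congr
      fun y => sub_add_cancel _ _
  have hgrowth : Tendsto (fun y : E => 2 * b - f 0 + m / 4 * ‖y‖ ^ 2) (cocompact E) atTop :=
    tendsto_atTop_add_const_left _ _
      (((tendsto_pow_atTop two_ne_zero).comp tendsto_norm_cocompact_atTop).const_mul_atTop
        (by positivity))
  obtain ⟨x, hx⟩ := hcont.exists_forall_le (tendsto_atTop_mono
    (hf.quadratic_lower_bound fun y => hb ⟨y, rfl⟩) hgrowth)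
  exact ⟨x, fun y _ => hx y⟩

lemma lipschitzWith_of_mul_norm_sq_le_inner {T : E → E} (hm : 0 < m)
    (hT : ∀ a b, m * ‖T a - T b‖ ^ 2 ≤ ⟪a - b, T a - T b⟫) :
    LipschitzWith (Real.toNNReal m⁻¹) T := by
  refine LipschitzWith.of_dist_le_mul fun a b => ?_
  rw [Real.coe_toNNReal _ (inv_nonneg.2 hm.le), dist_eq_norm, dist_eq_norm, inv_mul_eq_div,
    le_div_iff₀ hm]
  have hcs : m * ‖T a - T b‖ ^ 2 ≤ ‖a - b‖ * ‖T a - T b‖ :=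
    (hT a b).trans (real_inner_le_norm _ _)
  rcases (norm_nonneg (T a - T b)).eq_or_lt with h0 | hpos
  · rw [← h0, zero_mul]
    exact norm_nonneg _
  · exact le_of_mul_le_mul_right (by linarith) hpos

lemma mul_norm_sq_le_inner_of_isMinOn (hψ : StrongConvexOn univ m ψ)
    (hY : ∀ x, IsMinOn (fun y => ψ y - ⟪x, y⟫) univ (Y x)) (a b : E) :
    m * ‖Y a - Y b‖ ^ 2 ≤ ⟪a - b, Y a - Y b⟫ := by
  have ha := (hψ.sub_inner a).add_sq_le_of_isMinOn (hY a) (Y b)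
  have hb := (hψ.sub_inner b).add_sq_le_of_isMinOn (hY b) (Y a)
  rw [norm_sub_rev] at ha
  simp only [inner_sub_left, inner_sub_right] at ha hb ⊢
  linarith

lemma convexOn_inner_sub_of_isMinOn (hY : ∀ x, IsMinOn (fun y => ψ y - ⟪x, y⟫) univ (Y x)) :
    ConvexOn ℝ univ fun x => ⟪x, Y x⟫ - ψ (Y x) := by
  refine ⟨convex_univ, fun a _ b _ s t hs ht hst => ?_⟩
  set z := Y (s • a + t • b)
  have ha : ψ (Y a) - ⟪a, Y a⟫ ≤ ψ z - ⟪a, z⟫ := hY a (mem_univ z)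
  have hb : ψ (Y b) - ⟪b, Y b⟫ ≤ ψ z - ⟪b, z⟫ := hY b (mem_univ z)
  have hz : ψ z = s * ψ z + t * ψ z := by rw [← add_mul, hst, one_mul]
  simp only [inner_add_left, real_inner_smul_left, smul_eq_mul]
  nlinarith

lemma hasGradientAt_inner_sub_of_isMinOn [CompleteSpace E]
    (hY : ∀ x, IsMinOn (fun y => ψ y - ⟪x, y⟫) univ (Y x)) {x : E} (hc : ContinuousAt Y x) :
    HasGradientAt (fun x => ⟪x, Y x⟫ - ψ (Y x)) (Y x) x := by
  rw [hasGradientAt_iff_isLittleO, Asymptotics.isLittleO_iff]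
  intro ε hε
  filter_upwards [Metric.tendsto_nhds.1 hc ε hε] with x' hx'
  rw [dist_eq_norm] at hx'
  have hlow : ψ (Y x') - ⟪x', Y x'⟫ ≤ ψ (Y x) - ⟪x', Y x⟫ := hY x' (mem_univ _)
  have hup : ψ (Y x) - ⟪x, Y x⟫ ≤ ψ (Y x') - ⟪x, Y x'⟫ := hY x (mem_univ _)
  have hcs : ⟪x' - x, Y x' - Y x⟫ ≤ ‖x' - x‖ * ‖Y x' - Y x‖ := real_inner_le_norm _ _
  have hsmall : ‖x' - x‖ * ‖Y x' - Y x‖ ≤ ε * ‖x' - x‖ := by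
    rw [mul_comm ε]
    exact mul_le_mul_of_nonneg_left hx'.le (norm_nonneg _)
  rw [Real.norm_eq_abs, abs_le, real_inner_comm (x' - x)]
  simp only [inner_sub_left, inner_sub_right] at hcs ⊢
  constructor <;> linarith [norm_nonneg (x' - x)]

lemma StrongConvexOn.exists_lipschitzWith_isMinOn_sub_inner [FiniteDimensional ℝ E]
    (hψ : StrongConvexOn univ m ψ) (hm : 0 < m)
    (hb : ∀ x, BddBelow (range fun y => ψ y - ⟪x, y⟫)) :
    ∃ Y : E → E, (∀ x, IsMinOn (fun y => ψ y - ⟪x, y⟫) univ (Y x)) ∧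
      LipschitzWith (Real.toNNReal m⁻¹) Y := by
  choose Y hY using fun x => (hψ.sub_inner x).exists_isMinOn hm (hb x)
  exact ⟨Y, hY, lipschitzWith_of_mul_norm_sq_le_inner hm (mul_norm_sq_le_inner_of_isMinOn hψ hY)⟩

end StrongConvexity

section InfConvolution

variable {E : Type*} [NormedAddCommGroup E] [InnerProductSpace ℝ E] {β : ℝ} {g : E → ℝ}

lemma half_mul_norm_sub_sq_sub_eq (hβ : β ≠ 0) (x y : E) :
    β / 2 * ‖x - y‖ ^ 2 - g y = β / 2 * ‖x‖ ^ 2 + β * (‖y‖ ^ 2 / 2 - g y / β - ⟪x, y⟫) := by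
  rw [norm_sub_sq_real]
  field_simp
  ring

lemma strongConvexOn_half_norm_sq_sub_div (hβ : 0 < β)
    (hg : ConvexOn ℝ univ fun x => β / (1 + β) / 2 * ‖x‖ ^ 2 - g x) :
    StrongConvexOn univ (β / (1 + β)) fun y => ‖y‖ ^ 2 / 2 - g y / β := by
  refine strongConvexOn_iff_convex.2 ((hg.smul (inv_nonneg.2 hβ.le)).congr fun y _ => ?_)
  simp only [smul_eq_mul]
  field_simp
  ring

lemma bddBelow_half_norm_sq_sub_div_sub_inner (hβ : 0 < β) {x : E}
    (hbdd : BddBelow (range fun y => β / 2 * ‖x - y‖ ^ 2 - g y)) :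
    BddBelow (range fun y => ‖y‖ ^ 2 / 2 - g y / β - ⟪x, y⟫) := by
  obtain ⟨b, hb⟩ := hbdd
  refine ⟨(b - β / 2 * ‖x‖ ^ 2) / β, forall_mem_range.2 fun y => ?_⟩
  have hby := hb (mem_range_self y)
  rw [half_mul_norm_sub_sq_sub_eq hβ.ne'] at hby
  rw [div_le_iff₀ hβ]
  linarith

lemma half_norm_sq_sub_inv_mul_iInf_eq (hβ : 0 < β) {x y₀ : E}
    (hbdd : BddBelow (range fun y => β / 2 * ‖x - y‖ ^ 2 - g y))
    (hy₀ : IsMinOn (fun y => ‖y‖ ^ 2 / 2 - g y / β - ⟪x, y⟫) univ y₀) :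
    1 / 2 * ‖x‖ ^ 2 - 1 / β * ⨅ y, (β / 2 * ‖x - y‖ ^ 2 - g y) =
      ⟪x, y₀⟫ - (‖y₀‖ ^ 2 / 2 - g y₀ / β) := by
  have hinf : ⨅ y, (β / 2 * ‖x - y‖ ^ 2 - g y) =
      β / 2 * ‖x‖ ^ 2 + β * (‖y₀‖ ^ 2 / 2 - g y₀ / β - ⟪x, y₀⟫) := by
    refine le_antisymm ((ciInf_le hbdd y₀).trans_eq (half_mul_norm_sub_sq_sub_eq hβ.ne' x y₀))
      (le_ciInf fun y => ?_)
    rw [half_mul_norm_sub_sq_sub_eq hβ.ne']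
    gcongr β / 2 * ‖x‖ ^ 2 + β * ?_
    exact hy₀ (mem_univ y)
  rw [hinf]
  field_simp
  ring

end InfConvolution

/-- If `g` is `β/(1+β)`-semiconcave then `q₁ - (1/β) (q_β □ (-g))` is convex and
`(1+β)/β`-smooth. -/
theorem smoothness_of_infConv {d : ℕ} (β : ℝ) (hβ : 0 < β) (g : Euc d → ℝ)
    (hg : ConvexOn ℝ Set.univ fun x => β / (1 + β) / 2 * ‖x‖ ^ 2 - g x)
    (hbdd : ∀ x : Euc d, BddBelow (Set.range fun y => β / 2 * ‖x - y‖ ^ 2 - g y)) :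
    ConvexOn ℝ Set.univ
      (fun x : Euc d => 1 / 2 * ‖x‖ ^ 2 - 1 / β * ⨅ y : Euc d, (β / 2 * ‖x - y‖ ^ 2 - g y)) ∧
    ∃ u' : Euc d → Euc d,
      (∀ x, HasGradientAt
        (fun x : Euc d => 1 / 2 * ‖x‖ ^ 2 - 1 / β * ⨅ y : Euc d, (β / 2 * ‖x - y‖ ^ 2 - g y))
        (u' x) x) ∧
      LipschitzWith (Real.toNNReal ((1 + β) / β)) u' := by
  obtain ⟨Y, hY, hYlip⟩ :=
    (strongConvexOn_half_norm_sq_sub_div hβ hg).exists_lipschitzWith_isMinOn_sub_inner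
      (by positivity) fun x => bddBelow_half_norm_sq_sub_div_sub_inner hβ (hbdd x)
  have hU : (fun x : Euc d => 1 / 2 * ‖x‖ ^ 2 - 1 / β * ⨅ y, (β / 2 * ‖x - y‖ ^ 2 - g y)) =
      fun x => ⟪x, Y x⟫ - (‖Y x‖ ^ 2 / 2 - g (Y x) / β) :=
    funext fun x => half_norm_sq_sub_inv_mul_iInf_eq hβ (hbdd x) (hY x)
  rw [inv_div] at hYlip
  rw [hU]
  exact ⟨convexOn_inner_sub_of_isMinOn hY, Y,
    fun x => hasGradientAt_inner_sub_of_isMinOn hY hYlip.continuous.continuousAt, hYlip⟩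
end
end

section
/- Let $\mathcal{X}, \mathcal{Y}$ be Polish spaces, $p \ge 1$, and let $C : \mathcal{X} \times \mathcal{P}_p(\mathcal{Y}) \to \mathbb{R} \cup \{+\infty\}$ be lower semicontinuous, bounded below, and convex in its second argument. Then the weak transport value $W(\mu,\nu) := \inf_{\pi \in \mathrm{Cpl}(\mu,\nu)} \int C(x,\pi_x)\,\mu(dx)$ is jointly convex: for all $\lambda \in [0,1]$, $\mu_1,\mu_2 \in \mathcal{P}_p(\mathcal{X})$, $\nu_1,\nu_2 \in \mathcal{P}_p(\mathcal{Y})$, $W(\lambda\mu_1 + (1-\lambda)\mu_2,\ \lambda\nu_1 + (1-\lambda)\nu_2) \le \lambda W(\mu_1,\nu_1) + (1-\lambda)W(\mu_2,\nu_2)$. -/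
/-!
Given couplings `π₁`, `π₂` of `(μ₁, ν₁)` and `(μ₂, ν₂)`, the measure `a π₁ + b π₂` couples the
mixed marginals, and its disintegration with respect to `μ = a μ₁ + b μ₂` is, `μ`-a.e., the mixture
`w₁ x • π₁ₓ + w₂ x • π₂ₓ`, where `w₁, w₂` are the densities of `a μ₁`, `b μ₂` with respect to `μ`
and sum to `1`. Convexity of `C` in the measure bounds the integrand pointwise by
`w₁ x * C x π₁ₓ + w₂ x * C x π₂ₓ`, whose `μ`-integral is `a` times the cost of `π₁` plus `b` times
the cost of `π₂`; taking infima over `π₁`, `π₂` gives the claim.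

Splitting that integral needs `x ↦ C x πₓ` to be measurable; lower semicontinuity provides this
because the weak topology on the probability measures on a Polish space is second countable.
-/

open MeasureTheory ProbabilityTheory Filter Topology Set
open scoped ENNReal

noncomputable section

variable {X Y : Type*}
  [MetricSpace X] [CompleteSpace X] [SecondCountableTopology X]
  [MeasurableSpace X] [BorelSpace X]
  [MetricSpace Y] [CompleteSpace Y] [SecondCountableTopology Y]
  [MeasurableSpace Y] [BorelSpace Y] [Nonempty Y]

/-- The weak optimal transport value associated to a cost `C : X × P(Y) → [0,∞]`,
computed through disintegrations of couplings. -/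
def weakTransport (C : X → Measure Y → ℝ≥0∞) (μ : Measure X) (ν : Measure Y) : ℝ≥0∞ :=
  ⨅ (π : Measure (X × Y)) (_ : π.fst = μ ∧ π.snd = ν) (h : IsFiniteMeasure π),
    haveI := h
    ∫⁻ x, C x (π.condKernel x) ∂μ

open TopologicalSpace
open scoped NNReal BoundedContinuousFunction

namespace MeasureTheory.ProbabilityMeasure

section Topology

variable {Ω : Type*} [MeasurableSpace Ω] [TopologicalSpace Ω] [OpensMeasurableSpace Ω]

theorem isInducing_testAgainstNN :
    IsInducing fun (μ : ProbabilityMeasure Ω) (f : Ω →ᵇ ℝ≥0) =>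
      μ.toFiniteMeasure.testAgainstNN f :=
  ((⟨rfl⟩ : IsInducing fun φ : WeakDual ℝ≥0 (Ω →ᵇ ℝ≥0) => ⇑φ).comp ⟨rfl⟩).comp
    (toFiniteMeasure_isEmbedding Ω).isInducing

theorem measurable_testAgainstNN (f : Ω →ᵇ ℝ≥0) :
    Measurable fun μ : ProbabilityMeasure Ω => μ.toFiniteMeasure.testAgainstNN f :=
  ((Measure.measurable_lintegral (by fun_prop)).comp measurable_subtype_coe).ennreal_toNNReal

/-- In a second countable space every open set is a countable union of basic open sets, and those
of the weak topology are cut out by finitely many integrals. -/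
instance opensMeasurableSpace [SecondCountableTopology (ProbabilityMeasure Ω)] :
    OpensMeasurableSpace (ProbabilityMeasure Ω) := by
  refine ⟨?_⟩
  rw [((isTopologicalBasis_pi fun _ => isTopologicalBasis_opens).isInducing
    isInducing_testAgainstNN).borel_eq_generateFrom]
  refine MeasurableSpace.generateFrom_le ?_
  rintro _ ⟨_, ⟨U, F, hU, rfl⟩, rfl⟩
  exact measurable_pi_lambda _ measurable_testAgainstNN
    (MeasurableSet.pi F.countable_toSet fun f hf => IsOpen.measurableSet (hU f hf))

end Topology

section Separable

variable {Ω : Type*} [MetricSpace Ω] [SeparableSpace Ω] [MeasurableSpace Ω] [BorelSpace Ω]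

/-- Every probability measure is the weak limit of its push-forwards by the simple functions
`SimpleFunc.approxOn id`, and these live on finite sets that do not depend on the measure. -/
instance separableSpace : SeparableSpace (ProbabilityMeasure Ω) := by
  cases isEmpty_or_nonempty Ω
  · infer_instance
  inhabit Ω
  let T (n : ℕ) : SimpleFunc Ω Ω := SimpleFunc.approxOn id measurable_id univ default trivial n
  let embed (n : ℕ) (Q : ProbabilityMeasure (T n).range) : ProbabilityMeasure Ω :=
    Q.map measurable_subtype_coe.aemeasurable
  have h_sep : TopologicalSpace.IsSeparable (⋃ n, range (embed n)) :=
    isSeparable_iUnion.2 fun n => isSeparable_range (continuous_map continuous_subtype_val)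
  refine isSeparable_univ_iff.1 (h_sep.closure.mono fun P _ => ?_)
  have h_lim := (tendstoInDistribution_of_ae_tendsto (fun n => (T n).measurable.aemeasurable)
    measurable_id.aemeasurable (μ' := (P : Measure Ω)) (.of_forall fun y =>
      SimpleFunc.tendsto_approxOn (s := univ) measurable_id trivial (by simp))).tendsto
  simp only [Measure.map_id] at h_lim
  refine mem_closure_of_tendsto h_lim (.of_forall fun n => mem_iUnion.2 ⟨n, ?_⟩)
  have hT : Measurable fun y => (⟨T n y, (T n).mem_range_self y⟩ : (T n).range) :=
    (T n).measurable.subtype_mk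
  refine ⟨P.map hT.aemeasurable, Subtype.ext ?_⟩
  simp [embed, Measure.map_map measurable_subtype_coe hT, Function.comp_def]

instance secondCountableTopology : SecondCountableTopology (ProbabilityMeasure Ω) := by
  let := pseudoMetrizableSpacePseudoMetric (ProbabilityMeasure Ω)
  exact UniformSpace.secondCountable_of_separable _

end Separable

end MeasureTheory.ProbabilityMeasure

theorem LowerSemicontinuous.measurable_comp_kernel {α Ω : Type*} [TopologicalSpace α]
    [MeasurableSpace α] [OpensMeasurableSpace α] [MetricSpace Ω] [SeparableSpace Ω]
    [MeasurableSpace Ω] [BorelSpace Ω] {C : α → Measure Ω → ℝ≥0∞}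
    (hC : LowerSemicontinuous fun q : α × ProbabilityMeasure Ω => C q.1 q.2)
    (κ : Kernel α Ω) [IsMarkovKernel κ] :
    Measurable fun x => C x (κ x) :=
  hC.measurable.comp (f := fun x => (x, (⟨κ x, inferInstance⟩ : ProbabilityMeasure Ω)))
    (measurable_id.prodMk κ.measurable.subtype_mk)

section Mixture

variable {α Ω : Type*} [MeasurableSpace α] [MeasurableSpace Ω]

theorem ProbabilityTheory.Kernel.withDensity_const_apply (κ : Kernel α Ω) [IsSFiniteKernel κ]
    {w : α → ℝ≥0∞} (hw : Measurable w) (x : α) :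
    κ.withDensity (fun x _ => w x) x = w x • κ x := by
  rw [Kernel.withDensity_apply κ (f := fun x (_ : Ω) => w x) (hw.comp measurable_fst),
    withDensity_const]

theorem MeasureTheory.Measure.compProd_withDensity_const (μ : Measure α) [SFinite μ]
    (κ : Kernel α Ω) [IsSFiniteKernel κ] {w : α → ℝ≥0∞} (hw : Measurable w)
    [IsSFiniteKernel (κ.withDensity fun x _ => w x)] :
    μ ⊗ₘ κ.withDensity (fun x _ => w x) = μ.withDensity w ⊗ₘ κ := by
  ext s hs
  rw [compProd_apply hs, compProd_apply hs,
    lintegral_withDensity_eq_lintegral_mul _ hw (Kernel.measurable_kernel_prodMk_left hs)]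
  simp [Kernel.withDensity_const_apply κ hw]

variable [StandardBorelSpace Ω] [Nonempty Ω]

theorem MeasureTheory.Measure.condKernel_add_compProd_ae_eq (μ₁ μ₂ : Measure α)
    [IsFiniteMeasure μ₁] [IsFiniteMeasure μ₂] (κ₁ κ₂ : Kernel α Ω)
    [IsMarkovKernel κ₁] [IsMarkovKernel κ₂] :
    (μ₁ ⊗ₘ κ₁ + μ₂ ⊗ₘ κ₂).condKernel =ᵐ[μ₁ + μ₂]
      fun x => μ₁.rnDeriv (μ₁ + μ₂) x • κ₁ x + μ₂.rnDeriv (μ₁ + μ₂) x • κ₂ x := by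
  -- truncating the weights at `1` makes the mixed kernel finite without changing it a.e.
  let w₁ x := min (μ₁.rnDeriv (μ₁ + μ₂) x) 1
  let w₂ x := min (μ₂.rnDeriv (μ₁ + μ₂) x) 1
  have hw₁ : Measurable w₁ := (measurable_rnDeriv _ _).min measurable_const
  have hw₂ : Measurable w₂ := (measurable_rnDeriv _ _).min measurable_const
  have hw₁_ae : w₁ =ᵐ[μ₁ + μ₂] μ₁.rnDeriv (μ₁ + μ₂) := by
    filter_upwards [rnDeriv_le_one_of_le (Measure.le_add_right le_rfl)] with x hx
    exact min_eq_left hx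
  have hw₂_ae : w₂ =ᵐ[μ₁ + μ₂] μ₂.rnDeriv (μ₁ + μ₂) := by
    filter_upwards [rnDeriv_le_one_of_le (Measure.le_add_left le_rfl)] with x hx
    exact min_eq_left hx
  have := Kernel.isFiniteKernel_withDensity_of_bounded κ₁ ENNReal.one_ne_top
    (f := fun x _ => w₁ x) fun _ _ => min_le_right _ _
  have := Kernel.isFiniteKernel_withDensity_of_bounded κ₂ ENNReal.one_ne_top
    (f := fun x _ => w₂ x) fun _ _ => min_le_right _ _
  let κ := κ₁.withDensity (fun x _ => w₁ x) + κ₂.withDensity (fun x _ => w₂ x)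
  have h_disint : (μ₁ + μ₂) ⊗ₘ κ = μ₁ ⊗ₘ κ₁ + μ₂ ⊗ₘ κ₂ := by
    rw [compProd_add_right, compProd_withDensity_const _ _ hw₁, compProd_withDensity_const _ _ hw₂,
      withDensity_congr_ae hw₁_ae, withDensity_congr_ae hw₂_ae,
      withDensity_rnDeriv_eq _ _ (absolutelyContinuous_of_le (Measure.le_add_right le_rfl)),
      withDensity_rnDeriv_eq _ _ (absolutelyContinuous_of_le (Measure.le_add_left le_rfl))]
  have h_fst : (μ₁ ⊗ₘ κ₁ + μ₂ ⊗ₘ κ₂).fst = μ₁ + μ₂ := by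
    rw [fst_add, fst_compProd, fst_compProd]
  have h_eq := eq_condKernel_of_measure_eq_compProd κ (by rw [h_fst, h_disint])
  rw [h_fst] at h_eq
  filter_upwards [h_eq, hw₁_ae, hw₂_ae] with x hx h₁ h₂
  rw [← hx, FunLike.coe_add, Pi.add_apply, Kernel.withDensity_const_apply _ hw₁,
    Kernel.withDensity_const_apply _ hw₂, h₁, h₂]

theorem lintegral_condKernel_add_compProd_le {C : α → Measure Ω → ℝ≥0∞}
    (hC_cvx : ∀ (x : α) (ρ₁ ρ₂ : Measure Ω) (a b : ℝ≥0∞), a + b = 1 →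
      C x (a • ρ₁ + b • ρ₂) ≤ a * C x ρ₁ + b * C x ρ₂)
    (μ₁ μ₂ : Measure α) [IsFiniteMeasure μ₁] [IsFiniteMeasure μ₂] (κ₁ κ₂ : Kernel α Ω)
    [IsMarkovKernel κ₁] [IsMarkovKernel κ₂]
    (hC₁ : Measurable fun x => C x (κ₁ x)) (hC₂ : Measurable fun x => C x (κ₂ x)) :
    ∫⁻ x, C x ((μ₁ ⊗ₘ κ₁ + μ₂ ⊗ₘ κ₂).condKernel x) ∂(μ₁ + μ₂)
      ≤ ∫⁻ x, C x (κ₁ x) ∂μ₁ + ∫⁻ x, C x (κ₂ x) ∂μ₂ := by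
  set μ := μ₁ + μ₂
  have h_sum : ∀ᵐ x ∂μ, μ₁.rnDeriv μ x + μ₂.rnDeriv μ x = 1 := by
    filter_upwards [Measure.rnDeriv_add μ₁ μ₂ μ, Measure.rnDeriv_self μ] with x h_add h_self
    rw [← Pi.add_apply, ← h_add, h_self]
  calc ∫⁻ x, C x ((μ₁ ⊗ₘ κ₁ + μ₂ ⊗ₘ κ₂).condKernel x) ∂μ
      = ∫⁻ x, C x (μ₁.rnDeriv μ x • κ₁ x + μ₂.rnDeriv μ x • κ₂ x) ∂μ :=
        lintegral_congr_ae <| (Measure.condKernel_add_compProd_ae_eq μ₁ μ₂ κ₁ κ₂).mono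
          fun x hx => congrArg (C x) hx
    _ ≤ ∫⁻ x, μ₁.rnDeriv μ x * C x (κ₁ x) + μ₂.rnDeriv μ x * C x (κ₂ x) ∂μ :=
        lintegral_mono_ae <| h_sum.mono fun x hx => hC_cvx _ _ _ _ _ hx
    _ = ∫⁻ x, μ₁.rnDeriv μ x * C x (κ₁ x) ∂μ + ∫⁻ x, μ₂.rnDeriv μ x * C x (κ₂ x) ∂μ :=
        lintegral_add_left ((Measure.measurable_rnDeriv _ _).mul hC₁) _
    _ = ∫⁻ x, C x (κ₁ x) ∂μ₁ + ∫⁻ x, C x (κ₂ x) ∂μ₂ := by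
        rw [lintegral_rnDeriv_mul (Measure.absolutelyContinuous_of_le (Measure.le_add_right le_rfl))
            hC₁.aemeasurable,
          lintegral_rnDeriv_mul (Measure.absolutelyContinuous_of_le (Measure.le_add_left le_rfl))
            hC₂.aemeasurable]

end Mixture

section WeakTransport

variable {α β : Type*} [MeasurableSpace α] [MetricSpace β] [CompleteSpace β]
  [SecondCountableTopology β] [MeasurableSpace β] [BorelSpace β] [Nonempty β]

theorem weakTransport_le_lintegral (C : α → Measure β → ℝ≥0∞) (π : Measure (α × β))
    [IsFiniteMeasure π] :
    weakTransport C π.fst π.snd ≤ ∫⁻ x, C x (π.condKernel x) ∂π.fst :=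
  iInf_le_of_le π <| iInf_le_of_le ⟨rfl, rfl⟩ <| iInf_le _ ‹_›

theorem weakTransport_smul_add_smul_le [TopologicalSpace α] [OpensMeasurableSpace α]
    {C : α → Measure β → ℝ≥0∞}
    (hC_lsc : LowerSemicontinuous fun q : α × ProbabilityMeasure β => C q.1 q.2)
    (hC_cvx : ∀ (x : α) (ρ₁ ρ₂ : Measure β) (a b : ℝ≥0∞), a + b = 1 →
      C x (a • ρ₁ + b • ρ₂) ≤ a * C x ρ₁ + b * C x ρ₂)
    {a b : ℝ≥0∞} (ha : a ≠ ∞) (hb : b ≠ ∞) (π₁ π₂ : Measure (α × β))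
    [IsFiniteMeasure π₁] [IsFiniteMeasure π₂] :
    weakTransport C (a • π₁.fst + b • π₂.fst) (a • π₁.snd + b • π₂.snd)
      ≤ a * ∫⁻ x, C x (π₁.condKernel x) ∂π₁.fst + b * ∫⁻ x, C x (π₂.condKernel x) ∂π₂.fst := by
  have := π₁.fst.smul_finite ha
  have := π₂.fst.smul_finite hb
  let π := (a • π₁.fst) ⊗ₘ π₁.condKernel + (b • π₂.fst) ⊗ₘ π₂.condKernel
  have h_fst : π.fst = a • π₁.fst + b • π₂.fst := by
    rw [Measure.fst_add, Measure.fst_compProd, Measure.fst_compProd]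
  have h_snd : π.snd = a • π₁.snd + b • π₂.snd := by
    simp only [π, Measure.compProd_smul_left, Measure.disintegrate, Measure.snd_add]
    simp only [Measure.snd, Measure.map_smul]
  calc weakTransport C (a • π₁.fst + b • π₂.fst) (a • π₁.snd + b • π₂.snd)
      ≤ ∫⁻ x, C x (π.condKernel x) ∂π.fst := h_fst ▸ h_snd ▸ weakTransport_le_lintegral C π
    _ ≤ ∫⁻ x, C x (π₁.condKernel x) ∂(a • π₁.fst) + ∫⁻ x, C x (π₂.condKernel x) ∂(b • π₂.fst) :=
        h_fst ▸ lintegral_condKernel_add_compProd_le hC_cvx _ _ _ _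
          (hC_lsc.measurable_comp_kernel _) (hC_lsc.measurable_comp_kernel _)
    _ = a * ∫⁻ x, C x (π₁.condKernel x) ∂π₁.fst + b * ∫⁻ x, C x (π₂.condKernel x) ∂π₂.fst := by
        rw [lintegral_smul_measure, lintegral_smul_measure, smul_eq_mul, smul_eq_mul]

end WeakTransport

theorem weakTransport_jointly_convex_general (C : X → Measure Y → ℝ≥0∞)
    (hC_lsc : LowerSemicontinuous fun q : X × ProbabilityMeasure Y => C q.1 (q.2 : Measure Y))
    (hC_cvx : ∀ (x : X) (ρ₁ ρ₂ : Measure Y) (a b : ℝ≥0∞), a + b = 1 →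
      C x (a • ρ₁ + b • ρ₂) ≤ a * C x ρ₁ + b * C x ρ₂)
    (μ₁ μ₂ : Measure X) (ν₁ ν₂ : Measure Y)
    (a b : ℝ≥0∞) (hab : a + b = 1) :
    weakTransport C (a • μ₁ + b • μ₂) (a • ν₁ + b • ν₂)
      ≤ a * weakTransport C μ₁ ν₁ + b * weakTransport C μ₂ ν₂ := by
  rcases eq_or_ne a 0 with rfl | ha₀
  · rw [zero_add] at hab
    simp [hab]
  rcases eq_or_ne b 0 with rfl | hb₀
  · rw [add_zero] at hab
    simp [hab]
  have ha : a ≠ ∞ := ne_top_of_le_ne_top ENNReal.one_ne_top (hab ▸ le_self_add)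
  have hb : b ≠ ∞ := ne_top_of_le_ne_top ENNReal.one_ne_top (hab ▸ le_add_self)
  conv_rhs => simp only [weakTransport, ENNReal.mul_iInf_of_ne ha₀ ha,
    ENNReal.mul_iInf_of_ne hb₀ hb, ENNReal.iInf_add, ENNReal.add_iInf]
  simp only [le_iInf_iff]
  rintro π₂ ⟨rfl, rfl⟩ _ π₁ ⟨rfl, rfl⟩ _
  exact weakTransport_smul_add_smul_le hC_lsc hC_cvx ha hb π₁ π₂

/-- Joint convexity of the weak optimal transport value in the pair of marginals. -/
theorem weakTransport_jointly_convex (p : ℝ) (hp : 1 ≤ p) (x₀ : X) (y₀ : Y)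
    (C : X → Measure Y → ℝ≥0∞)
    (hC_lsc : LowerSemicontinuous fun q : X × ProbabilityMeasure Y => C q.1 (q.2 : Measure Y))
    (hC_cvx : ∀ (x : X) (ρ₁ ρ₂ : Measure Y) (a b : ℝ≥0∞), a + b = 1 →
      C x (a • ρ₁ + b • ρ₂) ≤ a * C x ρ₁ + b * C x ρ₂)
    (μ₁ μ₂ : Measure X) (ν₁ ν₂ : Measure Y)
    [IsProbabilityMeasure μ₁] [IsProbabilityMeasure μ₂]
    [IsProbabilityMeasure ν₁] [IsProbabilityMeasure ν₂]
    (hμ₁ : ∫⁻ x, ENNReal.ofReal (dist x x₀ ^ p) ∂μ₁ < ⊤)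
    (hμ₂ : ∫⁻ x, ENNReal.ofReal (dist x x₀ ^ p) ∂μ₂ < ⊤)
    (hν₁ : ∫⁻ y, ENNReal.ofReal (dist y y₀ ^ p) ∂ν₁ < ⊤)
    (hν₂ : ∫⁻ y, ENNReal.ofReal (dist y y₀ ^ p) ∂ν₂ < ⊤)
    (a b : ℝ≥0∞) (hab : a + b = 1) :
    weakTransport C (a • μ₁ + b • μ₂) (a • ν₁ + b • ν₂)
      ≤ a * weakTransport C μ₁ ν₁ + b * weakTransport C μ₂ ν₂ :=
  weakTransport_jointly_convex_general C hC_lsc hC_cvx μ₁ μ₂ ν₁ ν₂ a b hab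
end
end
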